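/- Let x̄, p₁, p₂ ∈ ℝ^n, t ∈ [0,1], and p̄ = t p₁ + (1−t) p₂. If (λ₁, w₁), (λ₂, w₂), and (λ, w) are classical solutions of the critical cell problem at (x̄, p₁), (x̄, p₂), and (x̄, p̄) respectively, then λ ≤ t λ₁ + (1−t) λ₂; in other words, the effective Hamiltonian of the critical regime is convex in the momentum variable p. -/

import Mathlib

open Matrix MeasureTheory Set

noncomputable section

/-- Euclidean norm of a vector in `ℝ^k`. -/
def en {k : ℕ} (v : Fin k → ℝ) : ℝ := Real.sqrt (v ⬝ᵥ v)

/-- Squared Euclidean norm. -/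
def sq2 {k : ℕ} (v : Fin k → ℝ) : ℝ := v ⬝ᵥ v

/-- Partial derivative in the `i`-th coordinate direction. -/
def pd {m : ℕ} (w : (Fin m → ℝ) → ℝ) (i : Fin m) (y : Fin m → ℝ) : ℝ :=
  fderiv ℝ w y (Pi.single i 1)

/-- Gradient. -/
def vgrad {m : ℕ} (w : (Fin m → ℝ) → ℝ) (y : Fin m → ℝ) : Fin m → ℝ := fun i => pd w i y

/-- Hessian matrix. -/
def vhess {m : ℕ} (w : (Fin m → ℝ) → ℝ) (y : Fin m → ℝ) : Matrix (Fin m) (Fin m) ℝ :=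
  Matrix.of fun i j => pd (pd w j) i y

/-- `ℤ^m`-periodicity. -/
def ZPer {m : ℕ} (w : (Fin m → ℝ) → ℝ) : Prop :=
  ∀ (y : Fin m → ℝ) (k : Fin m → ℤ), w (y + fun i => (k i : ℝ)) = w y

/-- Standing hypotheses on the data. -/
structure StandingHyp {n m r : ℕ}
    (σ : (Fin n → ℝ) → (Fin m → ℝ) → Matrix (Fin n) (Fin r) ℝ)
    (b : (Fin m → ℝ) → Fin m → ℝ)
    (τ : (Fin m → ℝ) → Matrix (Fin m) (Fin r) ℝ) : Prop where
  σ_bdd : ∃ C : ℝ, ∀ x y i j, |σ x y i j| ≤ C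
  σ_lip : ∃ L : ℝ, ∀ x x' y y' i j, |σ x y i j - σ x' y' i j| ≤ L * (en (x - x') + en (y - y'))
  σ_per : ∀ x y (k : Fin m → ℤ), σ x (y + fun l => (k l : ℝ)) = σ x y
  b_lip : ∃ L : ℝ, ∀ y y' i, |b y i - b y' i| ≤ L * en (y - y')
  b_per : ∀ y (k : Fin m → ℤ), b (y + fun l => (k l : ℝ)) = b y
  τ_lip : ∃ L : ℝ, ∀ y y' i j, |τ y i j - τ y' i j| ≤ L * en (y - y')
  τ_per : ∀ y (k : Fin m → ℤ), τ (y + fun l => (k l : ℝ)) = τ y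
  τ_nondeg : ∃ θ : ℝ, 0 < θ ∧ ∀ y ξ, θ * sq2 ξ ≤ sq2 ((τ y)ᵀ *ᵥ ξ)

/-- Classical solution of the critical cell problem at `(x, p)`. -/
def IsCriticalSol {n m r : ℕ}
    (σ : (Fin n → ℝ) → (Fin m → ℝ) → Matrix (Fin n) (Fin r) ℝ)
    (b : (Fin m → ℝ) → Fin m → ℝ)
    (τ : (Fin m → ℝ) → Matrix (Fin m) (Fin r) ℝ)
    (x p : Fin n → ℝ) (lam : ℝ) (w : (Fin m → ℝ) → ℝ) : Prop :=
  ContDiff ℝ 2 w ∧ ZPer w ∧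
    ∀ y, lam = sq2 ((σ x y)ᵀ *ᵥ p)
        + 2 * ((τ y *ᵥ ((σ x y)ᵀ *ᵥ p)) ⬝ᵥ vgrad w y)
        + b y ⬝ᵥ vgrad w y
        + sq2 ((τ y)ᵀ *ᵥ vgrad w y)
        + Matrix.trace (τ y * (τ y)ᵀ * vhess w y)

/-- Classical solution of the supercritical cell problem at `(x, p)`. -/
def IsSupercriticalSol {n m r : ℕ}
    (σ : (Fin n → ℝ) → (Fin m → ℝ) → Matrix (Fin n) (Fin r) ℝ)
    (b : (Fin m → ℝ) → Fin m → ℝ)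
    (τ : (Fin m → ℝ) → Matrix (Fin m) (Fin r) ℝ)
    (x p : Fin n → ℝ) (lam : ℝ) (w : (Fin m → ℝ) → ℝ) : Prop :=
  ContDiff ℝ 2 w ∧ ZPer w ∧
    ∀ y, lam = sq2 ((σ x y)ᵀ *ᵥ p) + b y ⬝ᵥ vgrad w y
        + Matrix.trace (τ y * (τ y)ᵀ * vhess w y)

/-- Classical solution of the subcritical cell problem at `(x, p)`. -/
def IsSubcriticalSol {n m r : ℕ}
    (σ : (Fin n → ℝ) → (Fin m → ℝ) → Matrix (Fin n) (Fin r) ℝ)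
    (τ : (Fin m → ℝ) → Matrix (Fin m) (Fin r) ℝ)
    (x p : Fin n → ℝ) (lam : ℝ) (w : (Fin m → ℝ) → ℝ) : Prop :=
  ContDiff ℝ 1 w ∧ ZPer w ∧
    ∀ y, lam = sq2 ((τ y)ᵀ *ᵥ vgrad w y + (σ x y)ᵀ *ᵥ p)

/-! Maximum principle. `u = w - (t w₁ + (1 - t) w₂)` is periodic, so it attains its maximum at
some `y₀`; there `Dw = t Dw₁ + (1 - t) Dw₂` and `tr (τ τᵀ D²u) ≤ 0`. Completing the square, the
cell equation reads `λ = |τᵀ Dw + σᵀ p|² + b · Dw + tr (τ τᵀ D²w)`; at `y₀` the argument of the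
square is the convex combination of those for `w₁` and `w₂`, and the other terms are linear. -/

open Filter Topology

theorem IsLocalMax.deriv_deriv_nonpos {f : ℝ → ℝ} {x₀ : ℝ} (hmax : IsLocalMax f x₀)
    (hc : ContinuousAt f x₀) : deriv (deriv f) x₀ ≤ 0 := by
  by_contra! hpos
  -- by the second derivative test `x₀` would also be a local minimum, so `f` is locally constant
  have hmin : IsLocalMin f x₀ := isLocalMin_of_deriv_deriv_pos hpos hmax.deriv_eq_zero hc
  have hconst : f =ᶠ[𝓝 x₀] fun _ => f x₀ := by
    filter_upwards [hmax, hmin] with x hx₁ hx₂ using le_antisymm hx₁ hx₂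
  have : deriv (deriv f) x₀ = 0 := by
    rw [hconst.deriv.deriv_eq]
    simp
  exact hpos.ne' this

theorem fderiv_apply_eq_sum_pd {m : ℕ} (w : (Fin m → ℝ) → ℝ) (y ξ : Fin m → ℝ) :
    fderiv ℝ w y ξ = ∑ i, ξ i * pd w i y := by
  have hsingle : ∀ i : Fin m, (fun j => if i = j then (1 : ℝ) else 0) = Pi.single i 1 :=
    fun i => funext fun j => by simp [Pi.single_apply, eq_comm]
  conv_lhs => rw [pi_eq_sum_univ ξ]
  simp [pd, hsingle]

theorem hasDerivAt_comp_add_smul {m : ℕ} {w : (Fin m → ℝ) → ℝ} {y ξ : Fin m → ℝ} {s : ℝ}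
    (hw : DifferentiableAt ℝ w (y + s • ξ)) :
    HasDerivAt (fun s : ℝ => w (y + s • ξ)) (∑ i, ξ i * pd w i (y + s • ξ)) s := by
  have hline : HasDerivAt (fun s : ℝ => y + s • ξ) ξ s := by
    simpa using ((hasDerivAt_id s).smul_const ξ).const_add y
  have h := hw.hasFDerivAt.comp_hasDerivAt s hline
  rwa [fderiv_apply_eq_sum_pd] at h

theorem ContDiff.differentiable_pd {m : ℕ} {w : (Fin m → ℝ) → ℝ} (hw : ContDiff ℝ 2 w)
    (i : Fin m) : Differentiable ℝ (pd w i) :=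
  ((hw.fderiv_right (m := 1) (by norm_num)).clm_apply contDiff_const).differentiable one_ne_zero

theorem vgrad_eq_zero_of_isLocalMax {m : ℕ} {v : (Fin m → ℝ) → ℝ} {y₀ : Fin m → ℝ}
    (hmax : IsLocalMax v y₀) : vgrad v y₀ = 0 := by
  funext i
  simp [vgrad, pd, hmax.fderiv_eq_zero]

theorem dotProduct_vhess_mulVec_nonpos_of_isLocalMax {m : ℕ} {v : (Fin m → ℝ) → ℝ}
    {y₀ : Fin m → ℝ} (hv : ContDiff ℝ 2 v) (hmax : IsLocalMax v y₀) (ξ : Fin m → ℝ) :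
    ξ ⬝ᵥ (vhess v y₀ *ᵥ ξ) ≤ 0 := by
  have hdiff : Differentiable ℝ v := hv.differentiable two_ne_zero
  set g : ℝ → ℝ := fun s => v (y₀ + s • ξ)
  have hg_max : IsLocalMax g 0 :=
    IsLocalMax.comp_continuous (g := fun s : ℝ => y₀ + s • ξ) (by simpa using hmax) (by fun_prop)
  have hg' : deriv g = fun s => ∑ i, ξ i * pd v i (y₀ + s • ξ) :=
    funext fun s => (hasDerivAt_comp_add_smul (hdiff _)).deriv
  have hg'' : HasDerivAt (deriv g) (∑ i, ξ i * ∑ j, ξ j * pd (pd v i) j y₀) 0 := by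
    rw [hg']
    refine HasDerivAt.fun_sum fun i _ => (HasDerivAt.const_mul (ξ i) ?_)
    simpa using hasDerivAt_comp_add_smul (s := 0) (ξ := ξ) (y := y₀) (hv.differentiable_pd i _)
  calc ξ ⬝ᵥ (vhess v y₀ *ᵥ ξ) = ∑ i, ξ i * ∑ j, ξ j * pd (pd v i) j y₀ := by
        simp only [dotProduct, mulVec, vhess, Matrix.of_apply, Finset.mul_sum]
        rw [Finset.sum_comm]
        refine Finset.sum_congr rfl fun i _ => Finset.sum_congr rfl fun j _ => ?_
        ring
    _ = deriv (deriv g) 0 := hg''.deriv.symm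
    _ ≤ 0 := hg_max.deriv_deriv_nonpos (hdiff.continuous.comp (by fun_prop)).continuousAt

theorem Matrix.trace_mul_transpose_mul_nonpos {ι κ : Type*} [Fintype ι] [Fintype κ]
    (A : Matrix ι κ ℝ) {H : Matrix ι ι ℝ} (hH : ∀ ξ, ξ ⬝ᵥ (H *ᵥ ξ) ≤ 0) :
    trace (A * Aᵀ * H) ≤ 0 := by
  have hcols : trace (A * Aᵀ * H) = ∑ j, (fun i => A i j) ⬝ᵥ (H *ᵥ fun i => A i j) := by
    rw [trace_mul_cycle, trace_mul_comm]
    simp only [trace, diag, mul_apply, transpose_apply, dotProduct, mulVec, Finset.mul_sum]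
  rw [hcols]
  exact Finset.sum_nonpos fun j _ => hH _

theorem ZPer.exists_forall_le {m : ℕ} {v : (Fin m → ℝ) → ℝ} (hp : ZPer v) (hc : Continuous v) :
    ∃ y₀, ∀ y, v y ≤ v y₀ := by
  obtain ⟨y₀, -, hy₀⟩ := (isCompact_Icc (a := (0 : Fin m → ℝ)) (b := 1)).exists_isMaxOn
    ⟨0, by simp⟩ hc.continuousOn
  refine ⟨y₀, fun y => ?_⟩
  have hfract : v y = v fun i => Int.fract (y i) := by
    rw [← hp y fun i => -⌊y i⌋]
    congr 1
    funext i
    simp [Int.fract, sub_eq_add_neg]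
  rw [hfract]
  exact hy₀ ⟨fun i => Int.fract_nonneg _, fun i => (Int.fract_lt_one _).le⟩

theorem pd_sub_smul_add_smul {m : ℕ} {f g h : (Fin m → ℝ) → ℝ} (hf : Differentiable ℝ f)
    (hg : Differentiable ℝ g) (hh : Differentiable ℝ h) (a c : ℝ) (i : Fin m) :
    pd (f - (a • g + c • h)) i = pd f i - (a • pd g i + c • pd h i) := by
  have hga : Differentiable ℝ (a • g) := hg.const_smul a
  have hhc : Differentiable ℝ (c • h) := hh.const_smul c
  funext y
  simp [pd, fderiv_sub hf.differentiableAt (hga.add hhc).differentiableAt,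
    fderiv_add hga.differentiableAt hhc.differentiableAt, fderiv_const_smul_field]

section Combination

variable {m : ℕ} {f g h : (Fin m → ℝ) → ℝ} (a c : ℝ) (y : Fin m → ℝ)

theorem vgrad_sub_smul_add_smul (hf : Differentiable ℝ f) (hg : Differentiable ℝ g)
    (hh : Differentiable ℝ h) :
    vgrad (f - (a • g + c • h)) y = vgrad f y - (a • vgrad g y + c • vgrad h y) := by
  funext i
  simp [vgrad, pd_sub_smul_add_smul hf hg hh]

theorem vhess_sub_smul_add_smul (hf : ContDiff ℝ 2 f) (hg : ContDiff ℝ 2 g)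
    (hh : ContDiff ℝ 2 h) :
    vhess (f - (a • g + c • h)) y = vhess f y - (a • vhess g y + c • vhess h y) := by
  ext i j
  simp [vhess, pd_sub_smul_add_smul (hf.differentiable two_ne_zero)
      (hg.differentiable two_ne_zero) (hh.differentiable two_ne_zero),
    pd_sub_smul_add_smul (hf.differentiable_pd j) (hg.differentiable_pd j)
      (hh.differentiable_pd j)]

end Combination

theorem sq2_transpose_mulVec_add {m r : ℕ} (T : Matrix (Fin m) (Fin r) ℝ) (q : Fin m → ℝ)
    (u : Fin r → ℝ) :
    sq2 (Tᵀ *ᵥ q + u) = sq2 u + 2 * ((T *ᵥ u) ⬝ᵥ q) + sq2 (Tᵀ *ᵥ q) := by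
  have hcross : (T *ᵥ u) ⬝ᵥ q = (Tᵀ *ᵥ q) ⬝ᵥ u := by
    rw [dotProduct_comm, dotProduct_mulVec, mulVec_transpose]
  simp only [sq2, dotProduct_add, add_dotProduct, hcross, dotProduct_comm u]
  ring

theorem sq2_smul_add_smul_le {k : ℕ} {t : ℝ} (ht : t ∈ Icc (0 : ℝ) 1) (a b : Fin k → ℝ) :
    sq2 (t • a + (1 - t) • b) ≤ t * sq2 a + (1 - t) * sq2 b := by
  have hgap : t * sq2 a + (1 - t) * sq2 b - sq2 (t • a + (1 - t) • b)
      = t * (1 - t) * sq2 (a - b) := by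
    simp only [sq2, add_dotProduct, dotProduct_add, sub_dotProduct, dotProduct_sub,
      smul_dotProduct, dotProduct_smul, smul_eq_mul, dotProduct_comm b a]
    ring
  have hnonneg : 0 ≤ t * (1 - t) * sq2 (a - b) :=
    mul_nonneg (mul_nonneg ht.1 (sub_nonneg.mpr ht.2)) (dotProduct_self_star_nonneg _)
  linarith

theorem IsCriticalSol.eq_sq2_add {n m r : ℕ}
    {σ : (Fin n → ℝ) → (Fin m → ℝ) → Matrix (Fin n) (Fin r) ℝ} {b : (Fin m → ℝ) → Fin m → ℝ}
    {τ : (Fin m → ℝ) → Matrix (Fin m) (Fin r) ℝ} {x p : Fin n → ℝ} {lam : ℝ}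
    {w : (Fin m → ℝ) → ℝ} (hw : IsCriticalSol σ b τ x p lam w) (y : Fin m → ℝ) :
    lam = sq2 ((τ y)ᵀ *ᵥ vgrad w y + (σ x y)ᵀ *ᵥ p) + b y ⬝ᵥ vgrad w y
      + trace (τ y * (τ y)ᵀ * vhess w y) := by
  rw [hw.2.2 y, sq2_transpose_mulVec_add]
  ring

theorem stmt3_general {n m r : ℕ}
    (σ : (Fin n → ℝ) → (Fin m → ℝ) → Matrix (Fin n) (Fin r) ℝ)
    (b : (Fin m → ℝ) → Fin m → ℝ)
    (τ : (Fin m → ℝ) → Matrix (Fin m) (Fin r) ℝ)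
    (xbar p₁ p₂ : Fin n → ℝ) (t : ℝ) (ht : t ∈ Set.Icc (0:ℝ) 1)
    (lam₁ lam₂ lam : ℝ) (w₁ w₂ w : (Fin m → ℝ) → ℝ)
    (h₁ : IsCriticalSol σ b τ xbar p₁ lam₁ w₁)
    (h₂ : IsCriticalSol σ b τ xbar p₂ lam₂ w₂)
    (h : IsCriticalSol σ b τ xbar (t • p₁ + (1 - t) • p₂) lam w) :
    lam ≤ t * lam₁ + (1 - t) * lam₂ := by
  set u := w - (t • w₁ + (1 - t) • w₂)
  have hu : ContDiff ℝ 2 u := h.1.sub ((h₁.1.const_smul t).add (h₂.1.const_smul (1 - t)))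
  have hu_per : ZPer u := fun y k => by simp [u, h.2.1 y k, h₁.2.1 y k, h₂.2.1 y k]
  obtain ⟨y₀, hy₀⟩ := hu_per.exists_forall_le hu.continuous
  have hmax : IsLocalMax u y₀ := Eventually.of_forall hy₀
  have hgrad : vgrad w y₀ = t • vgrad w₁ y₀ + (1 - t) • vgrad w₂ y₀ := by
    rw [← sub_eq_zero, ← vgrad_sub_smul_add_smul _ _ _ (h.1.differentiable two_ne_zero)
      (h₁.1.differentiable two_ne_zero) (h₂.1.differentiable two_ne_zero)]
    exact vgrad_eq_zero_of_isLocalMax hmax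
  have htrace := (τ y₀).trace_mul_transpose_mul_nonpos
    (dotProduct_vhess_mulVec_nonpos_of_isLocalMax hu hmax)
  rw [vhess_sub_smul_add_smul _ _ _ h.1 h₁.1 h₂.1] at htrace
  simp only [Matrix.mul_sub, Matrix.mul_add, Matrix.mul_smul, trace_sub, trace_add, trace_smul,
    smul_eq_mul] at htrace
  set A := (σ xbar y₀)ᵀ
  set z₁ := (τ y₀)ᵀ *ᵥ vgrad w₁ y₀ + A *ᵥ p₁
  set z₂ := (τ y₀)ᵀ *ᵥ vgrad w₂ y₀ + A *ᵥ p₂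
  have hz : (τ y₀)ᵀ *ᵥ vgrad w y₀ + A *ᵥ (t • p₁ + (1 - t) • p₂) = t • z₁ + (1 - t) • z₂ := by
    simp only [z₁, z₂, hgrad, mulVec_add, mulVec_smul]
    module
  rw [h.eq_sq2_add y₀, h₁.eq_sq2_add y₀, h₂.eq_sq2_add y₀, hz, hgrad]
  simp only [dotProduct_add, dotProduct_smul, smul_eq_mul]
  linarith [sq2_smul_add_smul_le ht z₁ z₂]

/-- convexity in the momentum variable of the critical effective
Hamiltonian. -/
theorem stmt3 {n m r : ℕ}
    (σ : (Fin n → ℝ) → (Fin m → ℝ) → Matrix (Fin n) (Fin r) ℝ)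
    (b : (Fin m → ℝ) → Fin m → ℝ)
    (τ : (Fin m → ℝ) → Matrix (Fin m) (Fin r) ℝ)
    (hyp : StandingHyp σ b τ)
    (xbar p₁ p₂ : Fin n → ℝ) (t : ℝ) (ht : t ∈ Set.Icc (0:ℝ) 1)
    (lam₁ lam₂ lam : ℝ) (w₁ w₂ w : (Fin m → ℝ) → ℝ)
    (h₁ : IsCriticalSol σ b τ xbar p₁ lam₁ w₁)
    (h₂ : IsCriticalSol σ b τ xbar p₂ lam₂ w₂)
    (h : IsCriticalSol σ b τ xbar (t • p₁ + (1 - t) • p₂) lam w) :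
    lam ≤ t * lam₁ + (1 - t) * lam₂ :=
  stmt3_general σ b τ xbar p₁ p₂ t ht lam₁ lam₂ lam w₁ w₂ w h₁ h₂ h

end
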